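/- A d-regular graph G on n vertices is L-trace-minimal if and only if its complement is trace-minimal in the class of (n−1−d)-regular graphs on n vertices. -/
import Mathlib


open Matrix Polynomial BigOperators

/-- Laplacian matrix of a simple graph over ℝ (classical decidability). -/
noncomputable def lap {V : Type*} [Fintype V] [DecidableEq V] (G : SimpleGraph V) :
    Matrix V V ℝ := by classical exact G.lapMatrix ℝ

/-- `ℓ_k(G) = tr(L(G)^k)`. -/
noncomputable def lapTr {V : Type*} [Fintype V] [DecidableEq V] (G : SimpleGraph V)
    (k : ℕ) : ℝ := ((lap G) ^ k).trace

/-- Degree of a vertex (classical decidability). -/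
noncomputable def deg {V : Type*} [Fintype V] (G : SimpleGraph V) (v : V) : ℕ := by
  classical exact G.degree v

/-- A graph is d-regular when every vertex has degree d. -/
def IsReg {V : Type*} [Fintype V] (G : SimpleGraph V) (d : ℕ) : Prop := ∀ v : V, deg G v = d

/-- The sum Σ_i d_i (d_i+1)^(k-1) over the degree sequence. -/
noncomputable def degSum {V : Type*} [Fintype V] [DecidableEq V] (G : SimpleGraph V)
    (k : ℕ) : ℝ := ∑ i : V, (deg G i : ℝ) * ((deg G i : ℝ) + 1) ^ (k - 1)

/-- Gap sequence g_k(G) = ℓ_k(G) − Σ_i d_i (d_i+1)^(k-1). -/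
noncomputable def gap {V : Type*} [Fintype V] [DecidableEq V] (G : SimpleGraph V)
    (k : ℕ) : ℝ := lapTr G k - degSum G k
/-- Lexicographic order on real sequences (indexed here by ℕ, standing for indices 1,2,…):
either the sequences agree everywhere, or there is j with b i ≤ c i for i < j and b j < c j. -/
def SeqPreceq (b c : ℕ → ℝ) : Prop :=
  (∀ i, b i = c i) ∨ ∃ j, (∀ i, i < j → b i ≤ c i) ∧ b j < c j

/-- Adjacency trace sequence a_i(G) = tr(A(G)^i), for i ≥ 1 (index shifted). -/
noncomputable def aSeq {V : Type*} [Fintype V] (G : SimpleGraph V) (i : ℕ) : ℝ := by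
  classical exact ((G.adjMatrix ℝ) ^ (i + 1)).trace

/-- Laplacian trace sequence ℓ_i(G) = tr(L(G)^i), for i ≥ 1 (index shifted). -/
noncomputable def lSeq {V : Type*} [Fintype V] [DecidableEq V] (G : SimpleGraph V)
    (i : ℕ) : ℝ := lapTr G (i + 1)


/-- trace of the j-th power of the adjacency matrix (j from 0). -/
noncomputable def aSeqPow {V : Type*} [Fintype V] [DecidableEq V] (G : SimpleGraph V) (j : ℕ) : ℝ := by
  classical exact ((G.adjMatrix ℝ) ^ j).trace

section Aux
open Finset

/-- all-ones matrix -/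
noncomputable def JJ (n : ℕ) : Matrix (Fin n) (Fin n) ℝ := Matrix.of fun _ _ => 1

lemma rowsum_adj {n : ℕ} (G : SimpleGraph (Fin n)) [DecidableRel G.Adj] (i : Fin n) :
    (∑ j, G.adjMatrix ℝ i j) = (G.degree i : ℝ) := by
  simp [SimpleGraph.adjMatrix_apply, SimpleGraph.degree, SimpleGraph.neighborFinset_eq_filter]

lemma adj_mul_J {n : ℕ} (G : SimpleGraph (Fin n)) [DecidableRel G.Adj] {d' : ℕ}
    (h : G.IsRegularOfDegree d') : G.adjMatrix ℝ * JJ n = (d' : ℝ) • JJ n := by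
  ext i j
  simp only [Matrix.mul_apply, JJ, Matrix.of_apply, mul_one, Matrix.smul_apply, smul_eq_mul]
  rw [rowsum_adj, h i]

lemma J_mul_adj {n : ℕ} (G : SimpleGraph (Fin n)) [DecidableRel G.Adj] {d' : ℕ}
    (h : G.IsRegularOfDegree d') : JJ n * G.adjMatrix ℝ = (d' : ℝ) • JJ n := by
  ext i j
  simp only [Matrix.mul_apply, JJ, Matrix.of_apply, one_mul, Matrix.smul_apply, smul_eq_mul]
  have hsym : (∑ k, G.adjMatrix ℝ k j) = (∑ k, G.adjMatrix ℝ j k) := by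
    apply Finset.sum_congr rfl; intro k _
    simp [SimpleGraph.adjMatrix_apply, SimpleGraph.adj_comm]
  rw [hsym, rowsum_adj, h j]; ring

lemma J_mul_J {n : ℕ} : JJ n * JJ n = (n : ℝ) • JJ n := by
  ext i j; simp [JJ, Matrix.mul_apply]

lemma trace_J {n : ℕ} : (JJ n).trace = (n : ℝ) := by
  simp [JJ, Matrix.trace, Matrix.diag]

lemma lap_eq_B_sub_J {n d : ℕ} (G : SimpleGraph (Fin n)) [DecidableRel G.Adj]
    [DecidableRel Gᶜ.Adj] (h : G.IsRegularOfDegree d) :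
    G.lapMatrix ℝ = (((d : ℝ) + 1) • (1 : Matrix (Fin n) (Fin n) ℝ) + Gᶜ.adjMatrix ℝ) - JJ n := by
  ext i j
  by_cases hij : i = j
  · subst hij
    simp [SimpleGraph.lapMatrix, SimpleGraph.degMatrix, JJ, h i]
  · simp only [SimpleGraph.lapMatrix, SimpleGraph.degMatrix, Matrix.sub_apply, Matrix.add_apply,
      Matrix.diagonal_apply_ne _ hij, Matrix.smul_apply, Matrix.one_apply_ne hij, JJ,
      Matrix.of_apply, SimpleGraph.adjMatrix_apply, SimpleGraph.compl_adj, smul_eq_mul, mul_zero]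
    by_cases ha : G.Adj i j <;> simp [ha, hij]

lemma sub_J_pow {n : ℕ} (B : Matrix (Fin n) (Fin n) ℝ) (hBJ : B * JJ n = (n:ℝ) • JJ n)
    (hJB : JJ n * B = (n:ℝ) • JJ n) (k : ℕ) :
    (B - JJ n) ^ (k+1) = B ^ (k+1) - (n:ℝ) ^ k • JJ n := by
  have hJJ : JJ n * JJ n = (n:ℝ) • JJ n := J_mul_J
  have hpow : ∀ m, B ^ m * JJ n = (n:ℝ) ^ m • JJ n := by
    intro m
    induction m with
    | zero => simp
    | succ m ih =>
        rw [pow_succ, Matrix.mul_assoc, hBJ, Matrix.mul_smul, ih, smul_smul, pow_succ]; ring_nf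
  induction k with
  | zero => simp
  | succ k ih =>
      rw [pow_succ, ih, Matrix.sub_mul, smul_mul_assoc, Matrix.mul_sub, Matrix.mul_sub, hJB, hJJ,
        hpow, ← pow_succ]
      simp

lemma trace_binom {n : ℕ} (M : Matrix (Fin n) (Fin n) ℝ) (c : ℝ) (k : ℕ) :
    ((c • (1 : Matrix (Fin n) (Fin n) ℝ) + M) ^ k).trace
      = ∑ m ∈ Finset.range (k+1), c ^ m * (k.choose m : ℝ) * (M ^ (k - m)).trace := by
  have hcomm : Commute (c • (1 : Matrix (Fin n) (Fin n) ℝ)) M :=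
    (Commute.one_left M).smul_left c
  rw [hcomm.add_pow, Matrix.trace_sum]
  apply Finset.sum_congr rfl
  intro m hm
  rw [_root_.smul_pow, one_pow]
  have h2 : (↑(k.choose m) : Matrix (Fin n) (Fin n) ℝ) = ((k.choose m : ℝ)) • 1 := by
    simp only [Nat.cast_smul_eq_nsmul, nsmul_eq_mul, mul_one]
  rw [h2]
  simp only [Matrix.smul_mul, Matrix.mul_smul, Matrix.one_mul, Matrix.mul_one, Matrix.trace_smul,
    smul_eq_mul]
  ring

/-! instance-bridging lemmas -/

lemma deg_eq {V : Type*} [Fintype V] (G : SimpleGraph V) [DecidableRel G.Adj] (v : V) :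
    deg G v = G.degree v := by unfold deg; congr!

lemma lap_eq' {V : Type*} [Fintype V] [DecidableEq V] (G : SimpleGraph V)
    [DecidableRel G.Adj] : lap G = G.lapMatrix ℝ := by unfold lap; congr!

lemma aSeqPow_eq {V : Type*} [Fintype V] [DecidableEq V] (G : SimpleGraph V)
    [DecidableRel G.Adj] (j : ℕ) :
    aSeqPow G j = ((G.adjMatrix ℝ) ^ j).trace := by unfold aSeqPow; congr!

lemma aSeq_eq {V : Type*} [Fintype V] [DecidableEq V] (G : SimpleGraph V) [DecidableRel G.Adj] (i : ℕ) :
    aSeq G i = ((G.adjMatrix ℝ) ^ (i + 1)).trace := by unfold aSeq; congr!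

lemma isReg_iff {V : Type*} [Fintype V] (G : SimpleGraph V) [DecidableRel G.Adj] (d : ℕ) :
    IsReg G d ↔ G.IsRegularOfDegree d := by
  constructor
  · intro h v; rw [← deg_eq]; exact h v
  · intro h v; rw [deg_eq]; exact h v

/-- The key trace identity. -/
lemma lapTr_key {n d : ℕ} (hn : 0 < n) (G : SimpleGraph (Fin n)) [DecidableRel G.Adj]
    (h : G.IsRegularOfDegree d) (k : ℕ) :
    lapTr G (k+1) = (∑ m ∈ Finset.range (k+2),
      ((d:ℝ)+1) ^ m * (((k+1).choose m : ℕ) : ℝ) * (aSeqPow Gᶜ (k+1-m)))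
      - (n:ℝ)^(k+1) := by
  classical
  have hdlt : d < n := by
    have h1 := G.degree_lt_card_verts ⟨0, hn⟩
    rw [h ⟨0, hn⟩] at h1
    simpa using h1
  have hcompl : Gᶜ.IsRegularOfDegree (n - 1 - d) := by
    have h2 := h.compl
    simpa using h2
  set M := Gᶜ.adjMatrix ℝ with hM
  set B := ((d:ℝ)+1) • (1 : Matrix (Fin n) (Fin n) ℝ) + M with hB
  have hcast : ((d:ℝ)+1) + ((n - 1 - d : ℕ) : ℝ) = (n : ℝ) := by
    have e1 : (n - 1 - d : ℕ) = n - (d + 1) := by omega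
    rw [e1, Nat.cast_sub (by omega : d + 1 ≤ n)]
    push_cast; ring
  have hBJ : B * JJ n = (n:ℝ) • JJ n := by
    rw [hB, Matrix.add_mul, Matrix.smul_mul, Matrix.one_mul, hM, adj_mul_J Gᶜ hcompl,
      ← add_smul, hcast]
  have hJB : JJ n * B = (n:ℝ) • JJ n := by
    rw [hB, Matrix.mul_add, Matrix.mul_smul, Matrix.mul_one, hM, J_mul_adj Gᶜ hcompl,
      ← add_smul, hcast]
  have hL : G.lapMatrix ℝ = B - JJ n := lap_eq_B_sub_J G h
  have e2 : lapTr G (k+1) = ((B - JJ n) ^ (k+1)).trace := by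
    rw [lapTr, lap_eq', hL]
  rw [e2, sub_J_pow B hBJ hJB, Matrix.trace_sub, Matrix.trace_smul, trace_J, smul_eq_mul,
    trace_binom, ← pow_succ]
  congr 1
  apply Finset.sum_congr rfl
  intro m _
  rw [aSeqPow_eq]

end Aux

section Lex
open Finset

/-- strictly-below-zero lexicographically -/
def S0 (x : ℕ → ℝ) : Prop := ∃ j, (∀ i, i < j → x i ≤ 0) ∧ x j < 0

/-- at-most-zero lexicographically -/
def P0 (x : ℕ → ℝ) : Prop := (∀ i, x i = 0) ∨ S0 x

lemma seqPreceq_iff (b c : ℕ → ℝ) : SeqPreceq b c ↔ P0 (fun i => b i - c i) := by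
  unfold SeqPreceq P0 S0
  constructor
  · rintro (h | ⟨j, h1, h2⟩)
    · exact Or.inl fun i => sub_eq_zero_of_eq (h i)
    · exact Or.inr ⟨j, fun i hi => sub_nonpos.mpr (h1 i hi), sub_neg.mpr h2⟩
  · rintro (h | ⟨j, h1, h2⟩)
    · exact Or.inl fun i => sub_eq_zero.mp (h i)
    · exact Or.inr ⟨j, fun i hi => sub_nonpos.mp (h1 i hi), sub_neg.mp h2⟩

lemma P0_total (x : ℕ → ℝ) : P0 x ∨ S0 (fun i => -x i) := by
  classical
  by_cases h : ∀ i, x i = 0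
  · exact Or.inl (Or.inl h)
  · push_neg at h
    set j := Nat.find h with hj
    have hjs : x j ≠ 0 := Nat.find_spec h
    have hmin : ∀ i, i < j → x i = 0 := fun i hi => not_not.mp (Nat.find_min h hi)
    rcases hjs.lt_or_gt with h1 | h1
    · exact Or.inl (Or.inr ⟨j, fun i hi => (hmin i hi).le, h1⟩)
    · exact Or.inr ⟨j, fun i hi => by simp only [hmin i hi]; simp, by simpa [neg_lt_zero] using h1⟩

lemma P0_not_both (x : ℕ → ℝ) (h1 : P0 x) (h2 : S0 (fun i => -x i)) : False := by
  obtain ⟨j, hj1, hj2⟩ := h2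
  have hpos : 0 < x j := by simpa [neg_lt_zero] using hj2
  rcases h1 with h | ⟨j', h1', h2'⟩
  · rw [h j] at hpos; exact lt_irrefl 0 hpos
  · rcases lt_trichotomy j j' with hlt | heq | hgt
    · exact absurd (h1' j hlt) (not_le.mpr hpos)
    · subst heq; exact absurd h2' (not_lt.mpr hpos.le)
    · have := hj1 j' hgt
      have : 0 ≤ x j' := by simpa [neg_nonpos] using this
      exact absurd h2' (not_lt.mpr this)

lemma S0_transfer (w : ℕ → ℕ → ℝ) (hw : ∀ i j, 0 ≤ w i j) (hdiag : ∀ i, w i i = 1)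
    (u v : ℕ → ℝ) (hv : ∀ i, v i = ∑ j ∈ Finset.range (i+1), w i j * u j) :
    S0 u → S0 v := by
  rintro ⟨j, h1, h2⟩
  refine ⟨j, fun i hi => ?_, ?_⟩
  · rw [hv]
    apply Finset.sum_nonpos
    intro m hm
    exact mul_nonpos_of_nonneg_of_nonpos (hw i m)
      (h1 m (lt_of_le_of_lt (Nat.lt_succ_iff.mp (Finset.mem_range.mp hm)) hi))
  · rw [hv, Finset.sum_range_succ, hdiag, one_mul]
    have hS : (∑ m ∈ Finset.range j, w j m * u m) ≤ 0 := by
      apply Finset.sum_nonpos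
      intro m hm
      exact mul_nonpos_of_nonneg_of_nonpos (hw j m) (h1 m (Finset.mem_range.mp hm))
    linarith

lemma P0_transfer_iff (w : ℕ → ℕ → ℝ) (hw : ∀ i j, 0 ≤ w i j) (hdiag : ∀ i, w i i = 1)
    (u v : ℕ → ℝ) (hv : ∀ i, v i = ∑ j ∈ Finset.range (i+1), w i j * u j) :
    P0 u ↔ P0 v := by
  have hv' : ∀ i, (fun i => -v i) i = ∑ j ∈ Finset.range (i+1), w i j * (fun i => -u i) j := by
    intro i
    simp only [hv, mul_neg, Finset.sum_neg_distrib]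
  constructor
  · rintro (h | h)
    · exact Or.inl fun i => by rw [hv]; simp [h]
    · exact Or.inr (S0_transfer w hw hdiag u v hv h)
  · intro hP
    rcases P0_total u with h | h
    · exact h
    · exact absurd (S0_transfer w hw hdiag _ _ hv' h) (fun hs => P0_not_both v hP hs)

end Lex


section Final
open Finset

lemma aSeqPow_succ_eq_aSeq {V : Type*} [Fintype V] [DecidableEq V] (G : SimpleGraph V) (j : ℕ) :
    aSeqPow G (j + 1) = aSeq G j := by
  classical
  rw [aSeqPow_eq, aSeq_eq]

lemma aSeqPow_zero {n : ℕ} (G : SimpleGraph (Fin n)) : aSeqPow G 0 = (n : ℝ) := by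
  classical
  rw [aSeqPow_eq, pow_zero, Matrix.trace_one]
  simp

lemma diff_formula {n d : ℕ} (hn : 0 < n) (G H : SimpleGraph (Fin n))
    [DecidableRel G.Adj] [DecidableRel H.Adj]
    (hG : G.IsRegularOfDegree d) (hH : H.IsRegularOfDegree d) (i : ℕ) :
    lSeq G i - lSeq H i = ∑ j ∈ Finset.range (i+1),
      (((d:ℝ)+1)^(i-j) * (((i+1).choose (i-j) : ℕ) : ℝ)) * (aSeq Gᶜ j - aSeq Hᶜ j) := by
  classical
  have e1 := lapTr_key hn G hG i
  have e2 := lapTr_key hn H hH i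
  have step1 : lSeq G i - lSeq H i = ∑ m ∈ Finset.range (i+2),
      ((d:ℝ)+1)^m * (((i+1).choose m : ℕ):ℝ) * (aSeqPow Gᶜ (i+1-m) - aSeqPow Hᶜ (i+1-m)) := by
    rw [lSeq, lSeq, e1, e2]
    rw [sub_sub_sub_cancel_right, ← Finset.sum_sub_distrib]
    apply Finset.sum_congr rfl
    intro m _
    ring
  rw [step1, Finset.sum_range_succ]
  have hlast : aSeqPow Gᶜ (i+1-(i+1)) - aSeqPow Hᶜ (i+1-(i+1)) = 0 := by
    simp [aSeqPow_zero]
  rw [hlast, mul_zero, add_zero]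
  have step2 : ∀ m ∈ Finset.range (i+1),
      ((d:ℝ)+1)^m * (((i+1).choose m : ℕ):ℝ) * (aSeqPow Gᶜ (i+1-m) - aSeqPow Hᶜ (i+1-m))
        = ((d:ℝ)+1)^m * (((i+1).choose m : ℕ):ℝ) * (aSeq Gᶜ (i-m) - aSeq Hᶜ (i-m)) := by
    intro m hm
    have hm' : m ≤ i := Nat.lt_succ_iff.mp (Finset.mem_range.mp hm)
    have : i + 1 - m = (i - m) + 1 := by omega
    rw [this, aSeqPow_succ_eq_aSeq, aSeqPow_succ_eq_aSeq]
  rw [Finset.sum_congr rfl step2]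
  have hre := Finset.sum_range_reflect
    (fun j => (((d:ℝ)+1)^(i-j) * (((i+1).choose (i-j) : ℕ) : ℝ)) * (aSeq Gᶜ j - aSeq Hᶜ j)) (i+1)
  rw [← hre]
  apply Finset.sum_congr rfl
  intro m hm
  have hm' : m ≤ i := Nat.lt_succ_iff.mp (Finset.mem_range.mp hm)
  have h1 : i + 1 - 1 - m = i - m := by omega
  have h2 : i - (i - m) = m := Nat.sub_sub_self hm'
  simp only [h1, h2]

lemma core_iff {n d : ℕ} (hn : 0 < n) (G H : SimpleGraph (Fin n))
    [DecidableRel G.Adj] [DecidableRel H.Adj]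
    (hG : G.IsRegularOfDegree d) (hH : H.IsRegularOfDegree d) :
    SeqPreceq (lSeq G) (lSeq H) ↔ SeqPreceq (aSeq Gᶜ) (aSeq Hᶜ) := by
  rw [seqPreceq_iff, seqPreceq_iff]
  exact (P0_transfer_iff
    (fun i j => ((d:ℝ)+1)^(i-j) * (((i+1).choose (i-j) : ℕ) : ℝ))
    (fun i j => by positivity)
    (fun i => by simp)
    (fun j => aSeq Gᶜ j - aSeq Hᶜ j)
    (fun i => lSeq G i - lSeq H i)
    (fun i => diff_formula hn G H hG hH i)).symm

end Final

/-- a d-regular graph G on n vertices is ℒ-trace-minimal iff its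
complement is trace-minimal among (n−1−d)-regular graphs on n vertices. -/
theorem stmt18 (n d : ℕ) (G : SimpleGraph (Fin n)) (hreg : IsReg G d) :
    (∀ H : SimpleGraph (Fin n), IsReg H d → SeqPreceq (lSeq G) (lSeq H)) ↔
      (∀ H : SimpleGraph (Fin n), IsReg H (n - 1 - d) →
        SeqPreceq (aSeq Gᶜ) (aSeq H)) := by
  classical
  rcases Nat.eq_zero_or_pos n with hn0 | hn
  · subst hn0
    have hz : ∀ (F : SimpleGraph (Fin 0)) (i : ℕ), lSeq F i = 0 := by
      intro F i
      rw [lSeq, lapTr]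
      simp [Matrix.trace]
    have ha : ∀ (F : SimpleGraph (Fin 0)) (i : ℕ), aSeq F i = 0 := by
      intro F i
      rw [aSeq_eq]
      simp [Matrix.trace]
    constructor <;> intro _ H _ <;> exact Or.inl fun i => by simp [hz, ha]
  · have hGreg : G.IsRegularOfDegree d := (isReg_iff G d).mp hreg
    have hdlt : d < n := by
      have h1 := G.degree_lt_card_verts ⟨0, hn⟩
      rw [hGreg ⟨0, hn⟩] at h1
      simpa using h1
    constructor
    · intro hL H' hH'
      have hH'reg : H'.IsRegularOfDegree (n - 1 - d) := (isReg_iff H' _).mp hH'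
      have hHreg : H'ᶜ.IsRegularOfDegree d := by
        have h2 := hH'reg.compl
        have e : Fintype.card (Fin n) - 1 - (n - 1 - d) = d := by
          simp only [Fintype.card_fin]; omega
        rwa [e] at h2
      have h1 := hL H'ᶜ ((isReg_iff _ _).mpr hHreg)
      have h3 := (core_iff hn G H'ᶜ hGreg hHreg).mp h1
      rwa [compl_compl] at h3
    · intro hA H hH
      have hHreg : H.IsRegularOfDegree d := (isReg_iff H d).mp hH
      have hHc : Hᶜ.IsRegularOfDegree (n - 1 - d) := by
        have h2 := hHreg.compl
        simpa using h2
      have h1 := hA Hᶜ ((isReg_iff _ _).mpr hHc)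
      exact (core_iff hn G H hGreg hHreg).mpr h1
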